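/- Let f : 2^V → ℝ be a non-negative monotone increasing set function with submodularity ratio γ and generalized curvature α. Then for any A ⊆ B ⊆ V, the restriction f_{A,B} (a non-negative monotone increasing set function on 2^{V∖B}) has submodularity ratio γ_{A,B} ≥ γ and generalized curvature α_{A,B} ≤ α. -/

import Mathlib

/-!
Since the submodularity ratio is the largest and the generalized curvature the smallest
admissible constant, `γ_{A,B} ≥ γ` and `α_{A,B} ≤ α` say that every constant admissible for `f`
is admissible for `f_{A,B}`. This holds because the defining inequality of `f_{A,B}` at `(S, T)`
is that of `f` at `(S, A ∪ T)` for the ratio and at `(A ∪ S, T)` for the curvature, and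
enlarging `B` only shrinks the range of `(S, T)`.
-/

/-- The restriction f_{A,B} of a set function: T ↦ f(A ∪ T). -/
def restrictSF {V : Type*} [DecidableEq V] (f : Finset V → ℝ) (A : Finset V) :
    Finset V → ℝ := fun T => f (A ∪ T)

/-- γ is a valid submodularity-ratio bound for `f` regarded as a set function
on subsets of the complement of `B`:
Σ_{e∈S} Δ(e|T) ≥ γ·Δ(S|T) for all disjoint S, T ⊆ V∖B. -/
def HasSubmodRatioOn {V : Type*} [DecidableEq V] (B : Finset V)
    (f : Finset V → ℝ) (γ : ℝ) : Prop :=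
  ∀ S T : Finset V, Disjoint S T → Disjoint S B → Disjoint T B →
    γ * (f (S ∪ T) - f T) ≤ ∑ e ∈ S, (f (insert e T) - f T)

/-- α is a valid generalized-curvature bound for `f` regarded as a set
function on subsets of the complement of `B`:
Δ(e | (S∖{e}) ∪ T) ≥ (1−α)·Δ(e | S∖{e}) for all S, T ⊆ V∖B and e ∈ S∖T. -/
def HasCurvatureOn {V : Type*} [DecidableEq V] (B : Finset V)
    (f : Finset V → ℝ) (α : ℝ) : Prop :=
  ∀ S T : Finset V, Disjoint S B → Disjoint T B → ∀ e ∈ S, e ∉ T →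
    (1 - α) * (f (insert e (S.erase e)) - f (S.erase e)) ≤
      f (insert e (S.erase e ∪ T)) - f (S.erase e ∪ T)

namespace HasSubmodRatioOn

variable {V : Type*} [DecidableEq V] {f : Finset V → ℝ} {γ : ℝ}

theorem mono {B B' : Finset V} (hBB' : B ⊆ B') (h : HasSubmodRatioOn B f γ) :
    HasSubmodRatioOn B' f γ :=
  fun S T hST hSB' hTB' => h S T hST (hSB'.mono_right hBB') (hTB'.mono_right hBB')

theorem restrictSF {A C : Finset V} (h : HasSubmodRatioOn C f γ) (hAC : Disjoint A C) :
    HasSubmodRatioOn (A ∪ C) (restrictSF f A) γ := by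
  intro S T hST hSAC hTAC
  rw [Finset.disjoint_union_right] at hSAC hTAC
  have key := h S (A ∪ T) (Finset.disjoint_union_right.2 ⟨hSAC.1, hST⟩) hSAC.2
    (Finset.disjoint_union_left.2 ⟨hAC, hTAC.2⟩)
  simpa only [_root_.restrictSF, Finset.union_left_comm S A T, ← Finset.union_insert] using key

end HasSubmodRatioOn

namespace HasCurvatureOn

variable {V : Type*} [DecidableEq V] {f : Finset V → ℝ} {α : ℝ}

theorem mono {B B' : Finset V} (hBB' : B ⊆ B') (h : HasCurvatureOn B f α) :
    HasCurvatureOn B' f α :=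
  fun S T hSB' hTB' => h S T (hSB'.mono_right hBB') (hTB'.mono_right hBB')

theorem restrictSF {A C : Finset V} (h : HasCurvatureOn C f α) (hAC : Disjoint A C) :
    HasCurvatureOn (A ∪ C) (restrictSF f A) α := by
  intro S T hSAC hTAC e heS heT
  rw [Finset.disjoint_union_right] at hSAC hTAC
  have heA : e ∉ A := Finset.disjoint_left.1 hSAC.1 heS
  have key := h (A ∪ S) T (Finset.disjoint_union_left.2 ⟨hAC, hSAC.2⟩) hTAC.2 e
    (Finset.mem_union_right A heS) heT
  rw [Finset.erase_union_distrib, Finset.erase_eq_of_notMem heA] at key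
  simpa only [_root_.restrictSF, Finset.union_assoc, ← Finset.union_insert] using key

end HasCurvatureOn

theorem statement9_general {V : Type*} [DecidableEq V]
    (f : Finset V → ℝ)
    (γ α : ℝ) (A B : Finset V) (hAB : A ⊆ B) :
    (HasSubmodRatioOn ∅ f γ → HasSubmodRatioOn B (restrictSF f A) γ) ∧
    (HasCurvatureOn ∅ f α → HasCurvatureOn B (restrictSF f A) α) := by
  have hA : A ∪ ∅ ⊆ B := by rwa [Finset.union_empty]
  exact ⟨fun h => (h.restrictSF (Finset.disjoint_empty_right A)).mono hA,
    fun h => (h.restrictSF (Finset.disjoint_empty_right A)).mono hA⟩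

theorem statement9 {V : Type*} [Fintype V] [DecidableEq V]
    (f : Finset V → ℝ)
    (hnn : ∀ S : Finset V, 0 ≤ f S)
    (hmono : ∀ S T : Finset V, S ⊆ T → f S ≤ f T)
    (γ α : ℝ) (A B : Finset V) (hAB : A ⊆ B) :
    (HasSubmodRatioOn ∅ f γ → HasSubmodRatioOn B (restrictSF f A) γ) ∧
    (HasCurvatureOn ∅ f α → HasCurvatureOn B (restrictSF f A) α) :=
  statement9_general f γ α A B hAB
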